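/- Let n ≥ 1 and let ψ, c, a₁, …, aₙ : ℝⁿ → ℝ be smooth. Suppose that for every smooth compactly supported p : ℝⁿ → ℝ the integral ∫_{ℝⁿ} ψ(x)·(c(x)·p(x) + ∑_{i=1}^{n} aᵢ(x)·∂ᵢp(x)) dx vanishes. Then c(x)·ψ(x) = ∑_{i=1}^{n} ∂ᵢ[aᵢψ](x) for all x ∈ ℝⁿ. (An instance of Noether's second theorem in n independent variables: invariance under an infinitesimal symmetry D(p) = c·p + ∑ᵢ aᵢ·∂ᵢp depending linearly on an arbitrary function p of x₁, …, xₙ and its first derivatives forces the differential identity D*(ψ) = 0.) -/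

import Mathlib

/-- The `i`-th partial derivative of a function on `ℝⁿ = Fin n → ℝ`. -/
noncomputable def pderiv' {n : ℕ} (i : Fin n) (f : (Fin n → ℝ) → ℝ)
    (x : Fin n → ℝ) : ℝ :=
  fderiv ℝ f x (Pi.single i 1)

/-!
Integrating by parts in each coordinate (no boundary terms, since test functions have compact
support) turns the hypothesis into `∫ p · D*ψ = 0` for every test function `p`. As `D*ψ` is
continuous, the fundamental lemma of the calculus of variations forces `D*ψ = 0` everywhere.
-/

open MeasureTheory
open scoped ContDiff

theorem Continuous.eq_zero_of_integral_contDiff_smul_eq_zero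
    {E F : Type*} [NormedAddCommGroup E] [NormedSpace ℝ E] [FiniteDimensional ℝ E]
    [MeasurableSpace E] [BorelSpace E] [NormedAddCommGroup F] [NormedSpace ℝ F] [CompleteSpace F]
    {μ : Measure E} [μ.IsOpenPosMeasure] [IsLocallyFiniteMeasure μ] {f : E → F}
    (hf : Continuous f)
    (h : ∀ g : E → ℝ, ContDiff ℝ ∞ g → HasCompactSupport g → ∫ x, g x • f x ∂μ = 0) :
    f = 0 :=
  (hf.ae_eq_iff_eq μ continuous_zero).mp
    (ae_eq_zero_of_integral_contDiff_smul_eq_zero hf.locallyIntegrable h)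

noncomputable def formalAdjoint {n : ℕ} (c : (Fin n → ℝ) → ℝ) (a : Fin n → (Fin n → ℝ) → ℝ)
    (ψ : (Fin n → ℝ) → ℝ) (x : Fin n → ℝ) : ℝ :=
  c x * ψ x - ∑ i, pderiv' i (fun y => a i y * ψ y) x

section

variable {n : ℕ}

theorem ContDiff.continuous_pderiv' {f : (Fin n → ℝ) → ℝ} (hf : ContDiff ℝ 1 f) (i : Fin n) :
    Continuous (pderiv' i f) :=
  (hf.continuous_fderiv one_ne_zero).clm_apply continuous_const

theorem HasCompactSupport.pderiv' {f : (Fin n → ℝ) → ℝ} (hf : HasCompactSupport f) (i : Fin n) :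
    HasCompactSupport (pderiv' i f) :=
  hf.fderiv_apply ℝ _

theorem integral_mul_pderiv'_eq_neg {p g : (Fin n → ℝ) → ℝ} (hp : ContDiff ℝ 1 p)
    (hps : HasCompactSupport p) (hg : ContDiff ℝ 1 g) (i : Fin n) :
    ∫ x, p x * pderiv' i g x = -∫ x, pderiv' i p x * g x :=
  integral_mul_fderiv_eq_neg_fderiv_mul_of_integrable
    (((hp.continuous_pderiv' i).mul hg.continuous).integrable_of_hasCompactSupport
      (hps.pderiv' i).mul_right)
    ((hp.continuous.mul (hg.continuous_pderiv' i)).integrable_of_hasCompactSupport hps.mul_right)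
    ((hp.continuous.mul hg.continuous).integrable_of_hasCompactSupport hps.mul_right)
    (fun x _ => hp.differentiable one_ne_zero x) (fun x _ => hg.differentiable one_ne_zero x)

variable {c ψ : (Fin n → ℝ) → ℝ} {a : Fin n → (Fin n → ℝ) → ℝ}

theorem continuous_formalAdjoint (hc : Continuous c) (hψ : ContDiff ℝ 1 ψ)
    (ha : ∀ i, ContDiff ℝ 1 (a i)) : Continuous (formalAdjoint c a ψ) :=
  (hc.mul hψ.continuous).sub <|
    continuous_finsetSum _ fun i _ => ((ha i).mul hψ).continuous_pderiv' i

theorem integral_mul_formalAdjoint {p : (Fin n → ℝ) → ℝ} (hp : ContDiff ℝ 1 p)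
    (hps : HasCompactSupport p) (hc : Continuous c) (hψ : ContDiff ℝ 1 ψ)
    (ha : ∀ i, ContDiff ℝ 1 (a i)) :
    ∫ x, p x * formalAdjoint c a ψ x = ∫ x, ψ x * (c x * p x + ∑ i, a i x * pderiv' i p x) := by
  have hpcψ : Integrable fun x => p x * (c x * ψ x) :=
    (hp.continuous.mul (hc.mul hψ.continuous)).integrable_of_hasCompactSupport hps.mul_right
  have hp_div : ∀ i, Integrable fun x => p x * pderiv' i (fun y => a i y * ψ y) x := fun i =>
    (hp.continuous.mul (((ha i).mul hψ).continuous_pderiv' i)).integrable_of_hasCompactSupport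
      hps.mul_right
  have hdp : ∀ i, Integrable fun x => pderiv' i p x * (a i x * ψ x) := fun i =>
    ((hp.continuous_pderiv' i).mul ((ha i).mul hψ).continuous).integrable_of_hasCompactSupport
      (hps.pderiv' i).mul_right
  calc ∫ x, p x * formalAdjoint c a ψ x
      = (∫ x, p x * (c x * ψ x)) - ∑ i, ∫ x, p x * pderiv' i (fun y => a i y * ψ y) x := by
        rw [← integral_finsetSum _ fun i _ => hp_div i,
          ← integral_sub hpcψ (integrable_finsetSum _ fun i _ => hp_div i)]
        simp only [formalAdjoint, mul_sub, Finset.mul_sum]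
    _ = (∫ x, p x * (c x * ψ x)) + ∑ i, ∫ x, pderiv' i p x * (a i x * ψ x) := by
        simp only [fun i => integral_mul_pderiv'_eq_neg hp hps ((ha i).mul hψ) i,
          Finset.sum_neg_distrib, sub_neg_eq_add]
    _ = ∫ x, ψ x * (c x * p x + ∑ i, a i x * pderiv' i p x) := by
        rw [← integral_finsetSum _ fun i _ => hdp i,
          ← integral_add hpcψ (integrable_finsetSum _ fun i _ => hdp i)]
        congr 1 with x
        simp only [mul_add, Finset.mul_sum]
        congr 1
        · ring
        · exact Finset.sum_congr rfl fun i _ => by ring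

end

theorem noether_second_theorem_n_variables_general
    {n : ℕ}
    (ψ c : (Fin n → ℝ) → ℝ) (a : Fin n → (Fin n → ℝ) → ℝ)
    (hψ : ContDiff ℝ (⊤ : ℕ∞) ψ)
    (hc : ContDiff ℝ (⊤ : ℕ∞) c)
    (ha : ∀ i, ContDiff ℝ (⊤ : ℕ∞) (a i))
    (hvan : ∀ p : (Fin n → ℝ) → ℝ,
      ContDiff ℝ (⊤ : ℕ∞) p → HasCompactSupport p →
      ∫ x : Fin n → ℝ, ψ x * (c x * p x + ∑ i, a i x * pderiv' i p x) = 0) :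
    ∀ x : Fin n → ℝ,
      c x * ψ x = ∑ i, pderiv' i (fun y => a i y * ψ y) x := by
  have hψ₁ : ContDiff ℝ 1 ψ := hψ.of_le (by exact_mod_cast le_top)
  have ha₁ : ∀ i, ContDiff ℝ 1 (a i) := fun i => (ha i).of_le (by exact_mod_cast le_top)
  have hadj : formalAdjoint c a ψ = 0 :=
    (continuous_formalAdjoint hc.continuous hψ₁ ha₁).eq_zero_of_integral_contDiff_smul_eq_zero
      fun p hp hps => by
        rw [← hvan p hp hps, ← integral_mul_formalAdjoint (hp.of_le (by exact_mod_cast le_top))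
          hps hc.continuous hψ₁ ha₁]
        rfl
  intro x
  exact sub_eq_zero.mp (congrFun hadj x)

/-- An instance of Noether's second theorem in `n` independent variables:
if for every smooth compactly supported test function `p : ℝⁿ → ℝ` the
integral `∫ ψ·(c·p + ∑ᵢ aᵢ·∂ᵢp)` vanishes, then the differential identity
`D*(ψ) = 0` holds: `c·ψ = ∑ᵢ ∂ᵢ(aᵢψ)` identically. -/
theorem noether_second_theorem_n_variables
    {n : ℕ} (hn : 1 ≤ n)
    (ψ c : (Fin n → ℝ) → ℝ) (a : Fin n → (Fin n → ℝ) → ℝ)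
    (hψ : ContDiff ℝ (⊤ : ℕ∞) ψ)
    (hc : ContDiff ℝ (⊤ : ℕ∞) c)
    (ha : ∀ i, ContDiff ℝ (⊤ : ℕ∞) (a i))
    (hvan : ∀ p : (Fin n → ℝ) → ℝ,
      ContDiff ℝ (⊤ : ℕ∞) p → HasCompactSupport p →
      ∫ x : Fin n → ℝ, ψ x * (c x * p x + ∑ i, a i x * pderiv' i p x) = 0) :
    ∀ x : Fin n → ℝ,
      c x * ψ x = ∑ i, pderiv' i (fun y => a i y * ψ y) x :=
  noether_second_theorem_n_variables_general ψ c a hψ hc ha hvan
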